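/- arXiv:1812.01927 — 4 statements merged into one kernel-verified Lean document; each statement's English description precedes it below -/
import Mathlib

section
/- For n ≡ 0 or 1 (mod 4), the map π ↦ (i ↦ n+1-π(i)) restricts to a bijection of the alternating group A_n to itself that sends des(π) to n-1-des(π); consequently the number of even permutations of [n] with k descents equals the number of even permutations with n-1-k descents. -/
open Finset

/-- number of descents of a permutation of `Fin n` (one-line notation). -/
def desA {n : ℕ} (π : Equiv.Perm (Fin n)) : ℕ :=
  (Finset.univ.filter (fun i : Fin (n-1) =>
    π ⟨i.1+1, by have := i.2; omega⟩ < π ⟨i.1, by have := i.2; omega⟩)).card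

/-- number of ascents. -/
def ascA {n : ℕ} (π : Equiv.Perm (Fin n)) : ℕ :=
  (Finset.univ.filter (fun i : Fin (n-1) =>
    π ⟨i.1, by have := i.2; omega⟩ < π ⟨i.1+1, by have := i.2; omega⟩)).card

/-- number of inversions. -/
def invA {n : ℕ} (π : Equiv.Perm (Fin n)) : ℕ :=
  (Finset.univ.filter (fun p : Fin n × Fin n => p.1 < p.2 ∧ π p.2 < π p.1)).card

/-- bivariate Eulerian polynomial over all of `S_n`; variable 0 is `s`, variable 1 is `t`. -/
noncomputable def Abiv (n : ℕ) : MvPolynomial (Fin 2) ℚ :=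
  ∑ π : Equiv.Perm (Fin n), MvPolynomial.X 1 ^ desA π * MvPolynomial.X 0 ^ ascA π

noncomputable def AbivP (n : ℕ) : MvPolynomial (Fin 2) ℚ :=
  ∑ π ∈ Finset.univ.filter (fun π : Equiv.Perm (Fin n) => Equiv.Perm.sign π = 1),
    MvPolynomial.X 1 ^ desA π * MvPolynomial.X 0 ^ ascA π

noncomputable def AbivM (n : ℕ) : MvPolynomial (Fin 2) ℚ :=
  ∑ π ∈ Finset.univ.filter (fun π : Equiv.Perm (Fin n) => Equiv.Perm.sign π = -1),
    MvPolynomial.X 1 ^ desA π * MvPolynomial.X 0 ^ ascA π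

noncomputable def Auni (n : ℕ) : Polynomial ℚ :=
  ∑ π : Equiv.Perm (Fin n), Polynomial.X ^ desA π

noncomputable def AuniP (n : ℕ) : Polynomial ℚ :=
  ∑ π ∈ Finset.univ.filter (fun π : Equiv.Perm (Fin n) => Equiv.Perm.sign π = 1),
    Polynomial.X ^ desA π

noncomputable def AuniM (n : ℕ) : Polynomial ℚ :=
  ∑ π ∈ Finset.univ.filter (fun π : Equiv.Perm (Fin n) => Equiv.Perm.sign π = -1),
    Polynomial.X ^ desA π

/-- the operator `∂/∂s + ∂/∂t`. -/
noncomputable def Dop (f : MvPolynomial (Fin 2) ℚ) : MvPolynomial (Fin 2) ℚ :=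
  MvPolynomial.pderiv 0 f + MvPolynomial.pderiv 1 f

/-- A univariate polynomial is palindromic: with `r` the least exponent with nonzero
coefficient and `n` the degree, `a_{r+i} = a_{n-i}`. -/
def Palind (f : Polynomial ℚ) : Prop :=
  ∀ i ≤ f.natDegree - f.natTrailingDegree,
    f.coeff (f.natTrailingDegree + i) = f.coeff (f.natDegree - i)

/-- bivariate gamma positivity with center of symmetry `N/2`. -/
def BivGamma (f : MvPolynomial (Fin 2) ℚ) (N : ℕ) : Prop :=
  ∃ γ : ℕ → ℕ, (∀ i, γ i ≠ 0 → 2*i ≤ N) ∧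
    f = ∑ i ∈ Finset.range (N+1), (γ i : MvPolynomial (Fin 2) ℚ) *
      ((MvPolynomial.X 0 * MvPolynomial.X 1)^i * (MvPolynomial.X 0 + MvPolynomial.X 1)^(N - 2*i))

/-- univariate gamma positivity with center of symmetry `c2/2`. -/
def UniGamma (f : Polynomial ℚ) (c2 : ℕ) : Prop :=
  ∃ γ : ℕ → ℕ, (∀ i, γ i ≠ 0 → 2*i ≤ c2) ∧
    f = ∑ i ∈ Finset.range (c2+1), (γ i : ℚ) •
      (Polynomial.X^i * (1 + Polynomial.X)^(c2 - 2*i))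

/-- signed permutations: a permutation together with a sign for each position. -/
abbrev SignedPerm (n : ℕ) := Equiv.Perm (Fin n) × (Fin n → Bool)

/-- the one-line word of a signed permutation, 1-indexed, with `bw w 0 = 0`;
entry `i` is `±(w.1 i + 1)` viewed in `{-n,…,-1,1,…,n}`. -/
def bw {n : ℕ} (w : SignedPerm n) (i : ℕ) : ℤ :=
  if h : 1 ≤ i ∧ i ≤ n then
    (if w.2 ⟨i-1, by omega⟩ then -(((w.1 ⟨i-1, by omega⟩ : ℕ) : ℤ) + 1)
     else ((w.1 ⟨i-1, by omega⟩ : ℕ) : ℤ) + 1)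
  else 0

/-- type-B descents (including a possible descent at position 0). -/
def desB {n : ℕ} (w : SignedPerm n) : ℕ :=
  ((Finset.range n).filter (fun i => bw w (i+1) < bw w i)).card

/-- type-B inversions (length). -/
def invB {n : ℕ} (w : SignedPerm n) : ℕ :=
  (Finset.univ.filter (fun p : Fin n × Fin n => p.1 < p.2 ∧ bw w (p.2.1+1) < bw w (p.1.1+1))).card
  + (Finset.univ.filter (fun p : Fin n × Fin n => p.1 < p.2 ∧ bw w (p.2.1+1) < -(bw w (p.1.1+1)))).card
  + (Finset.univ.filter (fun i : Fin n => bw w (i.1+1) < 0)).card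

/-- type-D inversions. -/
def invD {n : ℕ} (w : SignedPerm n) : ℕ :=
  (Finset.univ.filter (fun p : Fin n × Fin n => p.1 < p.2 ∧ bw w (p.2.1+1) < bw w (p.1.1+1))).card
  + (Finset.univ.filter (fun p : Fin n × Fin n => p.1 < p.2 ∧ bw w (p.2.1+1) < -(bw w (p.1.1+1)))).card

noncomputable def Bbiv (n : ℕ) : MvPolynomial (Fin 2) ℚ :=
  ∑ w : SignedPerm n, MvPolynomial.X 1 ^ desB w * MvPolynomial.X 0 ^ (n - desB w)

noncomputable def BbivP (n : ℕ) : MvPolynomial (Fin 2) ℚ :=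
  ∑ w ∈ Finset.univ.filter (fun w : SignedPerm n => Even (invB w)),
    MvPolynomial.X 1 ^ desB w * MvPolynomial.X 0 ^ (n - desB w)

noncomputable def BbivM (n : ℕ) : MvPolynomial (Fin 2) ℚ :=
  ∑ w ∈ Finset.univ.filter (fun w : SignedPerm n => ¬ Even (invB w)),
    MvPolynomial.X 1 ^ desB w * MvPolynomial.X 0 ^ (n - desB w)

noncomputable def BuniP (n : ℕ) : Polynomial ℚ :=
  ∑ w ∈ Finset.univ.filter (fun w : SignedPerm n => Even (invB w)), Polynomial.X ^ desB w

noncomputable def BuniM (n : ℕ) : Polynomial ℚ :=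
  ∑ w ∈ Finset.univ.filter (fun w : SignedPerm n => ¬ Even (invB w)), Polynomial.X ^ desB w

/-- deleting the largest letter from the one-line notation of `π ∈ S_{n+1}`
gives a permutation of `[n]`. -/
noncomputable def restrictMax {n : ℕ} (π : Equiv.Perm (Fin (n+1))) : Equiv.Perm (Fin n) :=
  Equiv.ofBijective
    (fun i => Fin.castPred (π ((π.symm (Fin.last n)).succAbove i))
      (by
        intro h
        have h2 : (π.symm (Fin.last n)).succAbove i = π.symm (Fin.last n) := by
          apply π.injective
          rw [h, Equiv.apply_symm_apply]
        exact Fin.succAbove_ne _ i h2))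
    (Finite.injective_iff_bijective.mp (by
      intro i j h
      have h2 : π ((π.symm (Fin.last n)).succAbove i) = π ((π.symm (Fin.last n)).succAbove j) :=
        Fin.castPred_inj.mp h
      have h3 := π.injective h2
      exact Fin.succAbove_right_injective h3))

/-- number of even permutations of `[n]` with `k` descents (`k : ℤ`). -/
noncomputable def aP (n : ℕ) (k : ℤ) : ℕ :=
  (Finset.univ.filter (fun π : Equiv.Perm (Fin n) =>
    Equiv.Perm.sign π = 1 ∧ (desA π : ℤ) = k)).card

/-- number of odd permutations of `[n]` with `k` descents. -/
noncomputable def aM (n : ℕ) (k : ℤ) : ℕ :=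
  (Finset.univ.filter (fun π : Equiv.Perm (Fin n) =>
    Equiv.Perm.sign π = -1 ∧ (desA π : ℤ) = k)).card
lemma rev_succ_decomp (n : ℕ) :
    (Fin.revPerm : Equiv.Perm (Fin (n+1))) =
      Equiv.Perm.decomposeFin.symm (Fin.last n, Fin.revPerm * finRotate n) := by
  cases n with
  | zero => decide
  | succ m =>
    ext i
    refine Fin.cases ?_ (fun x => ?_) i
    · simp [Fin.rev_zero]
    · rw [Equiv.Perm.decomposeFin_symm_apply_succ, Equiv.Perm.mul_apply]
      rcases eq_or_ne x (Fin.last m) with h | h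
      · subst h
        simp [finRotate_last, Fin.rev_zero, Fin.succ_last,
          Equiv.swap_apply_right, Fin.rev_succ, Fin.rev_last]
      · have hx : (x : ℕ) < m := by
          have h2 := x.2
          have : (x : ℕ) ≠ m := fun hc => h (Fin.ext hc)
          omega
        have h1 : ((finRotate (m+1)) x : ℕ) = (x : ℕ) + 1 := by
          rw [coe_finRotate, if_neg h]
        have h3 : ((Fin.revPerm ((finRotate (m+1)) x)).succ : ℕ) = m - (x : ℕ) := by
          simp only [Fin.val_succ, Fin.revPerm_apply, Fin.val_rev, h1]
          omega
        rw [Equiv.swap_apply_of_ne_of_ne]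
        · rw [h3]
          simp only [Fin.revPerm_apply, Fin.val_rev, Fin.val_succ]
          omega
        · intro hc; apply_fun Fin.val at hc; rw [h3] at hc; simp at hc; omega
        · intro hc; apply_fun Fin.val at hc; rw [h3] at hc
          simp [Fin.val_last] at hc; omega

lemma sign_revPerm (n : ℕ) :
    Equiv.Perm.sign (Fin.revPerm : Equiv.Perm (Fin n)) = (-1 : ℤˣ)^(n.choose 2) := by
  induction n with
  | zero => decide
  | succ m ih =>
    rw [rev_succ_decomp, Equiv.Perm.decomposeFin.symm_sign, map_mul, ih]
    cases m with
    | zero => decide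
    | succ k =>
      rw [if_neg (by simp [Fin.ext_iff] : ¬ (Fin.last (k+1) = 0)), sign_finRotate,
        show (k+2).choose 2 = (k+1).choose 1 + (k+1).choose 2 from Nat.choose_succ_succ _ _,
        Nat.choose_one_right, pow_add, pow_succ]
      simp [mul_comm, mul_assoc, mul_left_comm]

lemma sign_revPerm_one (n : ℕ) (hn : n % 4 = 0 ∨ n % 4 = 1) :
    Equiv.Perm.sign (Fin.revPerm : Equiv.Perm (Fin n)) = 1 := by
  rw [sign_revPerm]
  have : Even (n.choose 2) := by
    rw [Nat.choose_two_right]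
    rcases hn with h | h
    · obtain ⟨m, rfl⟩ : ∃ m, n = 4*m := ⟨n/4, by omega⟩
      refine ⟨m*(4*m-1), ?_⟩
      rw [show 4*m*(4*m-1) = (m*(4*m-1)+m*(4*m-1))*2 by ring, Nat.mul_div_cancel _ two_pos]
    · obtain ⟨m, rfl⟩ : ∃ m, n = 4*m+1 := ⟨n/4, by omega⟩
      refine ⟨m*(4*m+1), ?_⟩
      rw [Nat.add_sub_cancel, show (4*m+1)*(4*m) = (m*(4*m+1)+m*(4*m+1))*2 by ring,
        Nat.mul_div_cancel _ two_pos]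
  exact this.neg_one_pow

lemma desA_le (n : ℕ) (π : Equiv.Perm (Fin n)) : desA π ≤ n - 1 := by
  classical
  calc desA π ≤ (univ : Finset (Fin (n-1))).card := Finset.card_filter_le _ _
  _ = n - 1 := by simp

lemma desA_rev (n : ℕ) (π : Equiv.Perm (Fin n)) :
    desA (Fin.revPerm * π) = n - 1 - desA π := by
  classical
  unfold desA
  set σ : Equiv.Perm (Fin n) := Fin.revPerm * π with hσ
  have hpred : ∀ i : Fin (n-1),
      (σ ⟨i.1+1, by have := i.2; omega⟩ < σ ⟨i.1, by have := i.2; omega⟩)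
      ↔ ¬ (π ⟨i.1+1, by have := i.2; omega⟩ < π ⟨i.1, by have := i.2; omega⟩) := by
    intro i
    have hne : π ⟨i.1+1, by have := i.2; omega⟩ ≠ π ⟨i.1, by have := i.2; omega⟩ := by
      intro hc
      have := π.injective hc
      simp [Fin.ext_iff] at this
    simp only [hσ, Equiv.Perm.mul_apply, Fin.revPerm_apply, Fin.rev_lt_rev]
    constructor
    · intro h hc; exact absurd (lt_trans h hc) (lt_irrefl _)
    · intro h; exact lt_of_le_of_ne (not_lt.mp h) (Ne.symm hne)
  rw [Finset.filter_congr (fun i _ => by rw [hpred i]), Finset.filter_not,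
    Finset.card_sdiff_of_subset (Finset.filter_subset _ _)]
  simp

lemma revPerm_mul_self (n : ℕ) : (Fin.revPerm * Fin.revPerm : Equiv.Perm (Fin n)) = 1 := by
  ext x
  simp [Fin.rev_rev]

theorem complement_map_preserves_alternating (n : ℕ) (hn : n % 4 = 0 ∨ n % 4 = 1) :
    (∀ π : Equiv.Perm (Fin n), Equiv.Perm.sign π = 1 →
      Equiv.Perm.sign (Fin.revPerm * π) = 1) ∧
    (∀ π : Equiv.Perm (Fin n), desA (Fin.revPerm * π) = n - 1 - desA π) ∧
    (∀ k : ℕ, k ≤ n - 1 →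
      (Finset.univ.filter (fun π : Equiv.Perm (Fin n) =>
        Equiv.Perm.sign π = 1 ∧ desA π = k)).card =
      (Finset.univ.filter (fun π : Equiv.Perm (Fin n) =>
        Equiv.Perm.sign π = 1 ∧ desA π = n - 1 - k)).card) := by
  classical
  have hsr : Equiv.Perm.sign (Fin.revPerm : Equiv.Perm (Fin n)) = 1 := sign_revPerm_one n hn
  refine ⟨fun π hπ => by rw [map_mul, hsr, hπ, one_mul], fun π => desA_rev n π, fun k hk => ?_⟩
  refine Finset.card_bij' (fun π _ => Fin.revPerm * π) (fun π _ => Fin.revPerm * π) ?_ ?_ ?_ ?_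
  · intro π hπ
    simp only [Finset.mem_filter, Finset.mem_univ, true_and] at hπ ⊢
    refine ⟨by rw [map_mul, hsr, hπ.1, one_mul], ?_⟩
    rw [desA_rev n π, hπ.2]
  · intro π hπ
    simp only [Finset.mem_filter, Finset.mem_univ, true_and] at hπ ⊢
    refine ⟨by rw [map_mul, hsr, hπ.1, one_mul], ?_⟩
    rw [desA_rev n π, hπ.2]
    omega
  · intro π _
    show Fin.revPerm * (Fin.revPerm * π) = π
    rw [← mul_assoc, revPerm_mul_self, one_mul]
  · intro π _
    show Fin.revPerm * (Fin.revPerm * π) = π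
    rw [← mul_assoc, revPerm_mul_self, one_mul]
end

section
/- For m ≥ 1, A_{2m}^+(s,t) = s·A_{2m-1}^+(s,t) + t·A_{2m-1}^-(s,t) + (1/2)·st·(∂/∂s + ∂/∂t) A_{2m-1}(s,t), where A_n(s,t), A_n^+(s,t), A_n^-(s,t) are the bivariate descent-ascent polynomials over S_n, A_n, and S_n \ A_n respectively. -/
open Finset

namespace AuxRec
open MvPolynomial
variable {M : ℕ}

def ins (σ : Equiv.Perm (Fin (M+1))) (p : Fin (M+2)) : Equiv.Perm (Fin (M+2)) :=
  (finSuccEquiv' p).trans ((Equiv.optionCongr σ).trans (finSuccEquiv' (Fin.last (M+1))).symm)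

lemma ins_self (σ : Equiv.Perm (Fin (M+1))) (p : Fin (M+2)) : ins σ p p = Fin.last (M+1) := by
  simp [ins, finSuccEquiv'_at, finSuccEquiv'_symm_none]

lemma ins_succAbove (σ : Equiv.Perm (Fin (M+1))) (p : Fin (M+2)) (i : Fin (M+1)) :
    ins σ p (p.succAbove i) = Fin.castSucc (σ i) := by
  simp [ins, finSuccEquiv'_succAbove, finSuccEquiv'_symm_some, Fin.succAbove_last]

lemma ins_val_lt (σ : Equiv.Perm (Fin (M+1))) (p : Fin (M+2)) {j : ℕ} (hj : j < p.1)
    (h2 : j < M + 2) :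
    ins σ p ⟨j, h2⟩ = Fin.castSucc (σ ⟨j, by omega⟩) := by
  have hjM : j < M + 1 := by omega
  have : (⟨j, h2⟩ : Fin (M+2)) = p.succAbove ⟨j, hjM⟩ := by
    rw [Fin.succAbove_of_castSucc_lt]
    · rfl
    · exact hj
  rw [this, ins_succAbove]

lemma ins_val_gt (σ : Equiv.Perm (Fin (M+1))) (p : Fin (M+2)) {j : ℕ} (hj : p.1 < j)
    (h2 : j < M + 2) :
    ins σ p ⟨j, h2⟩ = Fin.castSucc (σ ⟨j-1, by omega⟩) := by
  have hjM : j - 1 < M + 1 := by omega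
  have : (⟨j, h2⟩ : Fin (M+2)) = p.succAbove ⟨j-1, hjM⟩ := by
    rw [Fin.succAbove_of_le_castSucc]
    · ext; simp [Fin.val_succ]; omega
    · rw [Fin.le_castSucc_iff]
      simp [Fin.lt_def]; omega
  rw [this, ins_succAbove]

lemma ins_decomp (σ : Equiv.Perm (Fin (M+1))) (p : Fin (M+2)) :
    ins σ p = ins σ (Fin.last (M+1)) * ins 1 p := by
  apply Equiv.ext; intro x
  rcases eq_or_ne x p with rfl | hx
  · rw [ins_self]
    show _ = (ins σ (Fin.last (M+1))) (ins 1 x x)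
    rw [ins_self, ins_self]
  · obtain ⟨i, rfl⟩ := (Fin.exists_succAbove_eq hx)
    rw [ins_succAbove]
    show _ = (ins σ (Fin.last (M+1))) (ins 1 p (p.succAbove i))
    rw [ins_succAbove]
    have : Fin.castSucc ((1 : Equiv.Perm (Fin (M+1))) i) = (Fin.last (M+1)).succAbove i := by
      simp [Fin.succAbove_last]
    rw [this, ins_succAbove]

lemma sign_ins_last (σ : Equiv.Perm (Fin (M+1))) :
    Equiv.Perm.sign (ins σ (Fin.last (M+1))) = Equiv.Perm.sign σ := by
  have : ins σ (Fin.last (M+1)) =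
      Equiv.permCongr (finSuccEquiv' (Fin.last (M+1))).symm σ.optionCongr := by
    apply Equiv.ext; intro x; rfl
  rw [this, Equiv.Perm.sign_permCongr, Equiv.optionCongr_sign]

lemma ins_one_eq (p : Fin (M+2)) :
    ins (1 : Equiv.Perm (Fin (M+1))) p
      = Equiv.permCongr (Fin.revPerm) (Fin.cycleRange p.rev) := by
  apply Equiv.ext; intro x
  simp only [Equiv.permCongr_apply, Fin.revPerm_symm, Fin.revPerm_apply]
  rcases lt_trichotomy x p with h | rfl | h
  · have h1 : Fin.rev p < Fin.rev x := Fin.rev_lt_rev.2 h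
    rw [Fin.cycleRange_of_gt h1, Fin.rev_rev]
    have hx : x.1 < p.1 := h
    have := ins_val_lt (1 : Equiv.Perm (Fin (M+1))) p hx x.isLt
    simpa using this
  · rw [Fin.cycleRange_self, ins_self]
    ext; simp
  · have h1 : Fin.rev x < Fin.rev p := Fin.rev_lt_rev.2 h
    rw [Fin.cycleRange_of_lt h1]
    have hx : p.1 < x.1 := h
    have := ins_val_gt (1 : Equiv.Perm (Fin (M+1))) p hx x.isLt
    simp only [Equiv.Perm.one_apply] at this
    have hxe : (⟨x.1, x.isLt⟩ : Fin (M+2)) = x := rfl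
    rw [hxe] at this
    rw [this]
    apply Fin.ext
    have hlt : Fin.rev x < Fin.last (M+1) := lt_of_lt_of_le h1 (Fin.le_last _)
    rw [Fin.val_rev, Fin.val_add_one_of_lt hlt, Fin.val_rev]
    simp
    omega

lemma sign_ins (σ : Equiv.Perm (Fin (M+1))) (p : Fin (M+2)) :
    Equiv.Perm.sign (ins σ p) = Equiv.Perm.sign σ * (-1) ^ (M + 1 - p.1) := by
  rw [ins_decomp, map_mul, sign_ins_last, ins_one_eq, Equiv.Perm.sign_permCongr,
    Fin.sign_cycleRange, Fin.val_rev]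
  congr 2
  omega

def dnat {n : ℕ} (π : Equiv.Perm (Fin n)) (g : ℕ) : ℕ :=
  if h : g + 1 < n then (if π ⟨g+1, h⟩ < π ⟨g, by omega⟩ then 1 else 0) else 0

lemma desA_eq_sum {n : ℕ} (π : Equiv.Perm (Fin n)) :
    desA π = ∑ g ∈ Finset.range (n-1), dnat π g := by
  rw [desA, Finset.card_filter, ← Fin.sum_univ_eq_sum_range (fun g => dnat π g) (n-1)]
  apply Finset.sum_congr rfl
  intro i _
  have h : i.1 + 1 < n := by have := i.2; omega
  rw [dnat, dif_pos h]

lemma des_add_asc {n : ℕ} (π : Equiv.Perm (Fin n)) : desA π + ascA π = n - 1 := by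
  rw [desA, ascA, Finset.card_filter, Finset.card_filter, ← Finset.sum_add_distrib]
  have : ∀ i : Fin (n-1),
      ((if π ⟨i.1+1, by have := i.2; omega⟩ < π ⟨i.1, by have := i.2; omega⟩ then 1 else 0)
      + if π ⟨i.1, by have := i.2; omega⟩ < π ⟨i.1+1, by have := i.2; omega⟩ then 1 else 0) = 1 := by
    intro i
    have hne : π ⟨i.1, by have := i.2; omega⟩ ≠ π ⟨i.1+1, by have := i.2; omega⟩ := by
      intro h
      have := π.injective h
      simp [Fin.ext_iff] at this
    rcases lt_or_gt_of_ne hne with h | h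
    · rw [if_pos h, if_neg (asymm h)]
    · rw [if_pos h, if_neg (asymm h)]
  rw [Finset.sum_congr rfl (fun i _ => this i), Finset.sum_const, Finset.card_univ,
    Fintype.card_fin, smul_eq_mul, mul_one]

lemma desA_le {n : ℕ} (π : Equiv.Perm (Fin n)) : desA π ≤ n - 1 := by
  have := des_add_asc π; omega

lemma dnat_ins_A (σ : Equiv.Perm (Fin (M+1))) (p : Fin (M+2)) {g : ℕ} (h : g + 1 < p.1) :
    dnat (ins σ p) g = dnat σ g := by
  have hp : p.1 < M + 2 := p.isLt
  have h1 : g + 1 < M + 2 := by omega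
  have h2 : g + 1 < M + 1 := by omega
  rw [dnat, dif_pos h1, dnat, dif_pos h2]
  rw [ins_val_lt σ p (by omega : g+1 < p.1) h1, ins_val_lt σ p (by omega : g < p.1) (by omega)]
  simp only [Fin.castSucc_lt_castSucc_iff]

lemma dnat_ins_B (σ : Equiv.Perm (Fin (M+1))) (p : Fin (M+2)) {g : ℕ} (h : g + 1 = p.1) :
    dnat (ins σ p) g = 0 := by
  have hp : p.1 < M + 2 := p.isLt
  have h1 : g + 1 < M + 2 := by omega
  rw [dnat, dif_pos h1]
  have e1 : (⟨g+1, h1⟩ : Fin (M+2)) = p := by ext; exact h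
  rw [e1, ins_self, ins_val_lt σ p (by omega : g < p.1) (by omega)]
  rw [if_neg]
  exact not_lt.2 (Fin.le_last _)

lemma dnat_ins_C (σ : Equiv.Perm (Fin (M+1))) (p : Fin (M+2)) (h : p.1 < M + 1) :
    dnat (ins σ p) p.1 = 1 := by
  have h1 : p.1 + 1 < M + 2 := by omega
  rw [dnat, dif_pos h1]
  have e1 : (⟨p.1, by omega⟩ : Fin (M+2)) = p := by ext; rfl
  rw [e1, ins_self, ins_val_gt σ p (by omega : p.1 < p.1+1) h1]
  rw [if_pos (Fin.castSucc_lt_last _)]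

lemma dnat_ins_D (σ : Equiv.Perm (Fin (M+1))) (p : Fin (M+2)) {g : ℕ} (h : p.1 ≤ g)
    (h2 : g < M) :
    dnat (ins σ p) (g+1) = dnat σ g := by
  have h1 : g + 2 < M + 2 := by omega
  have h3 : g + 1 < M + 1 := by omega
  rw [dnat, dif_pos h1, dnat, dif_pos h3]
  rw [ins_val_gt σ p (by omega : p.1 < g+2) h1, ins_val_gt σ p (by omega : p.1 < g+1) (by omega)]
  simp only [Fin.castSucc_lt_castSucc_iff]
  rfl

lemma desA_ins_last (σ : Equiv.Perm (Fin (M+1))) :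
    desA (ins σ (Fin.last (M+1))) = desA σ := by
  rw [desA_eq_sum, desA_eq_sum]
  show ∑ g ∈ range (M+1), dnat (ins σ (Fin.last (M+1))) g = ∑ g ∈ range M, dnat σ g
  rw [Finset.sum_range_succ]
  rw [dnat_ins_B σ _ (by simp [Fin.last] : M + 1 = (Fin.last (M+1)).1), add_zero]
  apply Finset.sum_congr rfl
  intro g hg
  rw [Finset.mem_range] at hg
  exact dnat_ins_A σ _ (by simp [Fin.last]; omega)

lemma desA_ins_zero (σ : Equiv.Perm (Fin (M+1))) :
    desA (ins σ 0) = desA σ + 1 := by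
  rw [desA_eq_sum, desA_eq_sum]
  show ∑ g ∈ range (M+1), dnat (ins σ 0) g = (∑ g ∈ range M, dnat σ g) + 1
  rw [Finset.sum_range_succ']
  have h0 : dnat (ins σ 0) 0 = 1 := dnat_ins_C σ 0 (by simp)
  rw [h0]
  congr 1
  apply Finset.sum_congr rfl
  intro g hg
  rw [Finset.mem_range] at hg
  exact dnat_ins_D σ 0 (by simp) (by omega)

lemma desA_ins_mid (σ : Equiv.Perm (Fin (M+1))) (q : Fin M) :
    desA (ins σ (Fin.castSucc (Fin.succ q))) + dnat σ q.1 = desA σ + 1 := by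
  set p := Fin.castSucc (Fin.succ q) with hp
  have hpv : p.1 = q.1 + 1 := rfl
  have hq : q.1 < M := q.isLt
  rw [desA_eq_sum, desA_eq_sum]
  show (∑ g ∈ range (M+1), dnat (ins σ p) g) + dnat σ q.1 = (∑ g ∈ range M, dnat σ g) + 1
  rw [Finset.range_eq_Ico,
    ← Finset.sum_Ico_consecutive (fun g => dnat (ins σ p) g)
      (by omega : 0 ≤ q.1+2) (by omega : q.1+2 ≤ M+1)]
  rw [← Finset.range_eq_Ico, Finset.sum_range_succ, Finset.sum_range_succ]
  have hB : dnat (ins σ p) q.1 = 0 := dnat_ins_B σ p (by omega)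
  have hC : dnat (ins σ p) (q.1+1) = 1 := by
    have := dnat_ins_C σ p (by omega)
    rwa [hpv] at this
  rw [hB, hC]
  have hIco : ∑ g ∈ Finset.Ico (q.1+2) (M+1), dnat (ins σ p) g
      = ∑ g ∈ Finset.Ico (q.1+1) M, dnat σ g := by
    rw [Finset.sum_Ico_eq_sum_range, Finset.sum_Ico_eq_sum_range]
    have e : M + 1 - (q.1+2) = M - (q.1+1) := by omega
    rw [e]
    apply Finset.sum_congr rfl
    intro i hi
    rw [Finset.mem_range] at hi
    have : q.1 + 2 + i = (q.1 + 1 + i) + 1 := by omega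
    rw [this]
    exact dnat_ins_D σ p (by omega) (by omega)
  rw [hIco]
  have hA : ∑ g ∈ range q.1, dnat (ins σ p) g = ∑ g ∈ range q.1, dnat σ g := by
    apply Finset.sum_congr rfl
    intro g hg
    rw [Finset.mem_range] at hg
    exact dnat_ins_A σ p (by omega)
  rw [hA]
  have hR : ∑ g ∈ range M, dnat σ g
      = (∑ g ∈ range q.1, dnat σ g) + dnat σ q.1 + ∑ g ∈ Finset.Ico (q.1+1) M, dnat σ g := by
    rw [Finset.range_eq_Ico,
      ← Finset.sum_Ico_consecutive (fun g => dnat σ g) (by omega : 0 ≤ q.1+1) (by omega : q.1+1 ≤ M),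
      ← Finset.range_eq_Ico, Finset.sum_range_succ]
  rw [hR]
  omega

def J (σ : Equiv.Perm (Fin (M+1))) : Equiv.Perm (Fin (M+1)) :=
  Fin.revPerm * σ * Fin.revPerm

lemma J_apply (σ : Equiv.Perm (Fin (M+1))) (x : Fin (M+1)) :
    J σ x = Fin.rev (σ (Fin.rev x)) := rfl

lemma J_J (σ : Equiv.Perm (Fin (M+1))) : J (J σ) = σ := by
  apply Equiv.ext; intro x
  simp [J_apply, Fin.rev_rev]

lemma sign_J (σ : Equiv.Perm (Fin (M+1))) :
    Equiv.Perm.sign (J σ) = Equiv.Perm.sign σ := by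
  rw [J, map_mul, map_mul]
  have h : Equiv.Perm.sign (Fin.revPerm : Equiv.Perm (Fin (M+1)))
      * Equiv.Perm.sign (Fin.revPerm : Equiv.Perm (Fin (M+1))) = 1 := Int.units_mul_self _
  calc Equiv.Perm.sign Fin.revPerm * Equiv.Perm.sign σ * Equiv.Perm.sign Fin.revPerm
      = Equiv.Perm.sign σ * (Equiv.Perm.sign Fin.revPerm * Equiv.Perm.sign Fin.revPerm) := by
        rw [mul_comm (Equiv.Perm.sign (Fin.revPerm : Equiv.Perm (Fin (M+1)))) (Equiv.Perm.sign σ),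
          mul_assoc]
    _ = Equiv.Perm.sign σ := by rw [h, mul_one]

lemma J_desc_iff (σ : Equiv.Perm (Fin (M+1))) {q : ℕ} (hq : q < M) :
    ((J σ) ⟨q+1, by omega⟩ < (J σ) ⟨q, by omega⟩
      ↔ σ ⟨(M-1-q)+1, by omega⟩ < σ ⟨M-1-q, by omega⟩) := by
  rw [J_apply, J_apply]
  have e1 : Fin.rev (⟨q+1, by omega⟩ : Fin (M+1)) = ⟨M-1-q, by omega⟩ := by
    ext; simp [Fin.val_rev]; omega
  have e2 : Fin.rev (⟨q, by omega⟩ : Fin (M+1)) = ⟨(M-1-q)+1, by omega⟩ := by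
    ext; simp [Fin.val_rev]; omega
  rw [e1, e2, Fin.rev_lt_rev]

lemma dnat_J (σ : Equiv.Perm (Fin (M+1))) {q : ℕ} (hq : q < M) :
    dnat (J σ) q = dnat σ (M-1-q) := by
  have h1 : q + 1 < M + 1 := by omega
  have h2 : (M-1-q) + 1 < M + 1 := by omega
  rw [dnat, dif_pos h1, dnat, dif_pos h2]
  rw [if_congr (J_desc_iff σ hq) rfl rfl]

lemma desA_J (σ : Equiv.Perm (Fin (M+1))) : desA (J σ) = desA σ := by
  rw [desA_eq_sum, desA_eq_sum]
  show ∑ g ∈ range M, dnat (J σ) g = ∑ g ∈ range M, dnat σ g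
  rw [← Finset.sum_range_reflect (fun g => dnat σ g) M]
  apply Finset.sum_congr rfl
  intro g hg
  rw [Finset.mem_range] at hg
  exact dnat_J σ hg

/-- the monomial attached to a permutation -/
noncomputable def mono {n : ℕ} (π : Equiv.Perm (Fin n)) : MvPolynomial (Fin 2) ℚ :=
  MvPolynomial.X 1 ^ desA π * MvPolynomial.X 0 ^ ascA π

lemma ascA_eq {n : ℕ} (π : Equiv.Perm (Fin n)) : ascA π = (n-1) - desA π := by
  have := des_add_asc π; omega

lemma mono_J (σ : Equiv.Perm (Fin (M+1))) : mono (J σ) = mono σ := by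
  rw [mono, mono, desA_J, ascA_eq, ascA_eq, desA_J]

lemma mono_ins_last (σ : Equiv.Perm (Fin (M+1))) :
    mono (ins σ (Fin.last (M+1))) = MvPolynomial.X 0 * mono σ := by
  have hd : desA σ ≤ M := desA_le σ
  rw [mono, mono, desA_ins_last, ascA_eq, ascA_eq, desA_ins_last]
  have e1 : (M+2)-1 - desA σ = ((M+1)-1 - desA σ) + 1 := by omega
  rw [e1, pow_succ]
  ring

lemma mono_ins_zero (σ : Equiv.Perm (Fin (M+1))) :
    mono (ins σ 0) = MvPolynomial.X 1 * mono σ := by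
  have hd : desA σ ≤ M := desA_le σ
  rw [mono, mono, desA_ins_zero, ascA_eq, ascA_eq, desA_ins_zero]
  have e1 : (M+2)-1 - (desA σ + 1) = (M+1)-1 - desA σ := by omega
  rw [e1, pow_succ]
  ring

lemma mono_ins_mid (σ : Equiv.Perm (Fin (M+1))) (q : Fin M) :
    mono (ins σ (Fin.castSucc (Fin.succ q)))
      = (if dnat σ q.1 = 1 then MvPolynomial.X 0 else MvPolynomial.X 1) * mono σ := by
  have hd : desA σ ≤ M := desA_le σ
  have hkey := desA_ins_mid σ q
  have hdn : dnat σ q.1 = 0 ∨ dnat σ q.1 = 1 := by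
    rw [dnat, dif_pos (by omega : q.1 + 1 < M + 1)]
    split <;> simp
  rcases hdn with h0 | h1
  · rw [h0] at hkey
    rw [if_neg (by omega)]
    rw [mono, mono, ascA_eq, ascA_eq, (by omega : desA (ins σ (Fin.castSucc (Fin.succ q))) = desA σ + 1)]
    have e1 : (M+2)-1 - (desA σ + 1) = (M+1)-1 - desA σ := by omega
    rw [e1, pow_succ]
    ring
  · rw [h1] at hkey
    rw [if_pos h1]
    rw [mono, mono, ascA_eq, ascA_eq, (by omega : desA (ins σ (Fin.castSucc (Fin.succ q))) = desA σ)]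
    have e1 : (M+2)-1 - desA σ = ((M+1)-1 - desA σ) + 1 := by omega
    rw [e1, pow_succ]
    ring

lemma ins_bijective :
    Function.Bijective (fun x : Equiv.Perm (Fin (M+1)) × Fin (M+2) => ins x.1 x.2) := by
  rw [Fintype.bijective_iff_injective_and_card]
  constructor
  · rintro ⟨σ, p⟩ ⟨σ', p'⟩ h
    simp only at h
    have hpp : p = p' := by
      by_contra hne
      obtain ⟨i, hi⟩ := Fin.exists_succAbove_eq (Ne.symm hne)
      have h1 : ins σ p p' = ins σ' p' p' := by rw [h]
      rw [ins_self, ← hi, ins_succAbove] at h1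
      exact absurd h1 (Fin.ne_last_of_lt (Fin.castSucc_lt_last _))
    subst hpp
    have hσ : σ = σ' := by
      apply Equiv.ext; intro i
      have h1 : ins σ p (p.succAbove i) = ins σ' p (p.succAbove i) := by rw [h]
      rw [ins_succAbove, ins_succAbove] at h1
      exact Fin.castSucc_injective _ h1
    rw [hσ]
  · rw [Fintype.card_prod, Fintype.card_perm, Fintype.card_perm, Fintype.card_fin,
      Fintype.card_fin]
    rw [Nat.factorial_succ (M+1)]
    ring

noncomputable def wq (σ : Equiv.Perm (Fin (M+1))) (q : Fin M) : MvPolynomial (Fin 2) ℚ :=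
  if dnat σ q.1 = 1 then X 0 else X 1

lemma mono_ins_mid' (σ : Equiv.Perm (Fin (M+1))) (q : Fin M) :
    mono (ins σ (Fin.castSucc (Fin.succ q))) = wq σ q * mono σ := mono_ins_mid σ q

lemma dnat_le_one (σ : Equiv.Perm (Fin (M+1))) (q : Fin M) : dnat σ q.1 ≤ 1 := by
  rw [dnat, dif_pos (by omega : q.1 + 1 < M + 1)]
  split <;> simp

lemma sum_dnat (σ : Equiv.Perm (Fin (M+1))) : ∑ q : Fin M, dnat σ q.1 = desA σ := by
  rw [desA_eq_sum]
  exact Fin.sum_univ_eq_sum_range (fun g => dnat σ g) M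

lemma sum_wq (σ : Equiv.Perm (Fin (M+1))) :
    ∑ q : Fin M, wq σ q * mono σ
      = ascA σ • (X 1 * mono σ) + desA σ • (X 0 * mono σ) := by
  have hpt : ∀ q : Fin M, wq σ q * mono σ
      = dnat σ q.1 • (X 0 * mono σ) + (1 - dnat σ q.1) • (X 1 * mono σ) := by
    intro q
    have h01 : dnat σ q.1 = 0 ∨ dnat σ q.1 = 1 := by have := dnat_le_one σ q; omega
    rw [wq]
    rcases h01 with h | h <;> rw [h] <;> simp
  have hstep : ∑ q : Fin M, wq σ q * mono σ
      = ∑ q : Fin M, (dnat σ q.1 • (X 0 * mono σ) + (1 - dnat σ q.1) • (X 1 * mono σ)) :=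
    Finset.sum_congr rfl (fun q _ => hpt q)
  rw [hstep, Finset.sum_add_distrib, ← Finset.sum_smul, ← Finset.sum_smul, sum_dnat]
  have hB : ∑ q : Fin M, (1 - dnat σ q.1) = ascA σ := by
    have hone : ∀ q : Fin M, dnat σ q.1 + (1 - dnat σ q.1) = 1 := fun q => by
      have := dnat_le_one σ q; omega
    have h1 : (∑ q : Fin M, dnat σ q.1) + (∑ q : Fin M, (1 - dnat σ q.1)) = M := by
      rw [← Finset.sum_add_distrib]
      rw [Finset.sum_congr rfl (fun q _ => hone q)]
      simp [Finset.card_univ]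
    rw [sum_dnat] at h1
    have h2 := des_add_asc σ
    simp only [Nat.add_sub_cancel] at h2
    omega
  rw [hB, add_comm]

lemma Dop_pow (d a : ℕ) : X 0 * X 1 * Dop (X 1 ^ d * X 0 ^ a)
    = a • (X 1 * (X 1 ^ d * X 0 ^ a)) + d • (X 0 * (X 1 ^ d * X 0 ^ a)) := by
  have h01 : (0 : Fin 2) ≠ 1 := by decide
  have h10 : (1 : Fin 2) ≠ 0 := by decide
  rcases d with _|d <;> rcases a with _|a <;>
    simp [Dop, MvPolynomial.pderiv_mul, MvPolynomial.pderiv_pow, MvPolynomial.pderiv_X_self,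
      MvPolynomial.pderiv_X_of_ne h01, MvPolynomial.pderiv_X_of_ne h10,
      succ_nsmul, add_smul, smul_add, nsmul_eq_mul] <;> ring

lemma Dop_Abiv (M : ℕ) : X 0 * X 1 * Dop (Abiv (M+1))
    = ∑ σ : Equiv.Perm (Fin (M+1)), (ascA σ • (X 1 * mono σ) + desA σ • (X 0 * mono σ)) := by
  have h0 : Abiv (M+1) = ∑ σ : Equiv.Perm (Fin (M+1)), mono σ := rfl
  rw [h0]
  have hD : Dop (∑ σ : Equiv.Perm (Fin (M+1)), mono σ)
      = ∑ σ : Equiv.Perm (Fin (M+1)), Dop (mono σ) := by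
    rw [Dop, map_sum, map_sum, ← Finset.sum_add_distrib]
    rfl
  rw [hD, Finset.mul_sum]
  exact Finset.sum_congr rfl (fun σ _ => Dop_pow (desA σ) (ascA σ))

lemma units_flip (u : ℤˣ) {a b : ℕ} (h : (-1:ℤˣ)^a = -((-1:ℤˣ)^b)) :
    (u * (-1:ℤˣ)^a = 1) ↔ ¬(u * (-1:ℤˣ)^b = 1) := by
  rw [h, mul_neg]
  rcases Int.units_eq_one_or (u * (-1:ℤˣ)^b) with h1 | h1 <;> rw [h1] <;> decide

lemma units_odd (u : ℤˣ) {a : ℕ} (h : Odd a) : (u * (-1:ℤˣ)^a = 1) ↔ u = -1 := by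
  rw [Odd.neg_one_pow h]
  rcases Int.units_eq_one_or u with h1 | h1 <;> rw [h1] <;> decide

lemma units_even (u : ℤˣ) {a : ℕ} (h : Even a) : (u * (-1:ℤˣ)^a = 1) ↔ u = 1 := by
  rw [Even.neg_one_pow h]
  rcases Int.units_eq_one_or u with h1 | h1 <;> rw [h1] <;> decide

lemma cancel (k : ℕ) :
    ∑ σ : Equiv.Perm (Fin (2*k+1)), ∑ q : Fin (2*k),
      (if Equiv.Perm.sign σ * (-1:ℤˣ)^(2*k - q.1) = 1 then wq σ q * mono σ else 0)
    = MvPolynomial.C (1/2 : ℚ) * (X 0 * X 1 * Dop (Abiv (2*k+1))) := by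
  set F : Equiv.Perm (Fin (2*k+1)) × Fin (2*k) → MvPolynomial (Fin 2) ℚ :=
    fun x => if Equiv.Perm.sign x.1 * (-1:ℤˣ)^(2*k - x.2.1) = 1 then wq x.1 x.2 * mono x.1 else 0
    with hF
  set Fc : Equiv.Perm (Fin (2*k+1)) × Fin (2*k) → MvPolynomial (Fin 2) ℚ :=
    fun x => if ¬ (Equiv.Perm.sign x.1 * (-1:ℤˣ)^(2*k - x.2.1) = 1) then wq x.1 x.2 * mono x.1 else 0
    with hFc
  have hbij : Function.Bijective
      (fun x : Equiv.Perm (Fin (2*k+1)) × Fin (2*k) => (J x.1, Fin.rev x.2)) := by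
    apply Function.Involutive.bijective
    intro x
    simp [J_J, Fin.rev_rev]
  have hpoint : ∀ x, Fc x = F (J x.1, Fin.rev x.2) := by
    rintro ⟨σ, q⟩
    have hq : q.1 < 2*k := q.isLt
    have hrv : (Fin.rev q).1 = 2*k - 1 - q.1 := by rw [Fin.val_rev]; omega
    have hw : wq (J σ) (Fin.rev q) = wq σ q := by
      rw [wq, wq, hrv, dnat_J σ (by omega : 2*k-1-q.1 < 2*k),
        (by omega : 2*k - 1 - (2*k-1-q.1) = q.1)]
    have hcond : (Equiv.Perm.sign (J σ) * (-1:ℤˣ)^(2*k - (Fin.rev q).1) = 1)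
        ↔ ¬ (Equiv.Perm.sign σ * (-1:ℤˣ)^(2*k - q.1) = 1) := by
      rw [sign_J, hrv]
      apply units_flip
      have e1 : 2*k - (2*k-1-q.1) = q.1 + 1 := by omega
      rw [e1]
      rcases Nat.even_or_odd q.1 with h | h
      · rw [Odd.neg_one_pow (Even.add_one h),
          Even.neg_one_pow (by rw [Nat.even_iff] at h ⊢; omega : Even (2*k - q.1))]
      · rw [Even.neg_one_pow (Odd.add_one h),
          Odd.neg_one_pow (by rw [Nat.odd_iff] at h ⊢; omega : Odd (2*k - q.1))]
        decide
    show (if ¬(Equiv.Perm.sign σ * (-1:ℤˣ)^(2*k - q.1) = 1) then wq σ q * mono σ else 0)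
      = (if Equiv.Perm.sign (J σ) * (-1:ℤˣ)^(2*k - (Fin.rev q).1) = 1
          then wq (J σ) (Fin.rev q) * mono (J σ) else 0)
    exact (if_congr hcond (by rw [hw, mono_J]) rfl).symm
  have hsum : ∑ x : Equiv.Perm (Fin (2*k+1)) × Fin (2*k), Fc x
      = ∑ x : Equiv.Perm (Fin (2*k+1)) × Fin (2*k), F x :=
    Fintype.sum_bijective _ hbij Fc F hpoint
  have htot : (∑ x : Equiv.Perm (Fin (2*k+1)) × Fin (2*k), F x)
      + ∑ x : Equiv.Perm (Fin (2*k+1)) × Fin (2*k), Fc x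
      = ∑ x : Equiv.Perm (Fin (2*k+1)) × Fin (2*k), wq x.1 x.2 * mono x.1 := by
    rw [← Finset.sum_add_distrib]
    apply Finset.sum_congr rfl
    intro x _
    rw [hF, hFc]
    simp only
    by_cases h : Equiv.Perm.sign x.1 * (-1:ℤˣ)^(2*k - x.2.1) = 1 <;> simp [h]
  have hgoal : (∑ σ : Equiv.Perm (Fin (2*k+1)), ∑ q : Fin (2*k),
      (if Equiv.Perm.sign σ * (-1:ℤˣ)^(2*k - q.1) = 1 then wq σ q * mono σ else 0))
      = ∑ x : Equiv.Perm (Fin (2*k+1)) × Fin (2*k), F x := by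
    rw [Fintype.sum_prod_type]
  rw [hgoal]
  have hS : ∑ x : Equiv.Perm (Fin (2*k+1)) × Fin (2*k), wq x.1 x.2 * mono x.1
      = X 0 * X 1 * Dop (Abiv (2*k+1)) := by
    rw [Fintype.sum_prod_type, Dop_Abiv]
    exact Finset.sum_congr rfl (fun σ _ => sum_wq σ)
  rw [hsum, hS] at htot
  have hhalf : (MvPolynomial.C (1/2 : ℚ) : MvPolynomial (Fin 2) ℚ) * 2 = 1 := by
    rw [← map_ofNat (MvPolynomial.C : ℚ →+* MvPolynomial (Fin 2) ℚ) 2, ← map_mul]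
    norm_num
  calc ∑ x : Equiv.Perm (Fin (2*k+1)) × Fin (2*k), F x
      = (MvPolynomial.C (1/2 : ℚ) * 2) * ∑ x : Equiv.Perm (Fin (2*k+1)) × Fin (2*k), F x := by
        rw [hhalf, one_mul]
    _ = MvPolynomial.C (1/2 : ℚ) * ((∑ x : Equiv.Perm (Fin (2*k+1)) × Fin (2*k), F x)
          + ∑ x : Equiv.Perm (Fin (2*k+1)) × Fin (2*k), F x) := by ring
    _ = MvPolynomial.C (1/2 : ℚ) * (X 0 * X 1 * Dop (Abiv (2*k+1))) := by rw [htot]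

theorem key (k : ℕ) :
    AbivP (2*k+2) = X 0 * AbivP (2*k+1) + X 1 * AbivM (2*k+1)
      + MvPolynomial.C (1/2 : ℚ) * (X 0 * X 1 * Dop (Abiv (2*k+1))) := by
  classical
  have h0 : AbivP (2*k+2)
      = ∑ π : Equiv.Perm (Fin (2*k+2)), (if Equiv.Perm.sign π = 1 then mono π else 0) := by
    have h : AbivP (2*k+2) = ∑ π ∈ Finset.univ.filter
        (fun π : Equiv.Perm (Fin (2*k+2)) => Equiv.Perm.sign π = 1), mono π := rfl
    rw [h, Finset.sum_filter]
  have h1 : (∑ π : Equiv.Perm (Fin (2*k+2)), (if Equiv.Perm.sign π = 1 then mono π else 0))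
      = ∑ x : Equiv.Perm (Fin (2*k+1)) × Fin (2*k+2),
          (if Equiv.Perm.sign (ins x.1 x.2) = 1 then mono (ins x.1 x.2) else 0) :=
    (Fintype.sum_bijective _ ins_bijective _ _ (fun x => rfl)).symm
  rw [h0, h1, Fintype.sum_prod_type]
  have hinner : ∀ σ : Equiv.Perm (Fin (2*k+1)),
      (∑ p : Fin (2*k+2), (if Equiv.Perm.sign (ins σ p) = 1 then mono (ins σ p) else 0))
      = ((if Equiv.Perm.sign σ = 1 then X 0 * mono σ else 0)
        + (if Equiv.Perm.sign σ = -1 then X 1 * mono σ else 0))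
        + ∑ q : Fin (2*k),
            (if Equiv.Perm.sign σ * (-1:ℤˣ)^(2*k - q.1) = 1 then wq σ q * mono σ else 0) := by
    intro σ
    rw [Fin.sum_univ_castSucc, Fin.sum_univ_succ]
    have hlast : (if Equiv.Perm.sign (ins σ (Fin.last (2*k+1))) = 1
        then mono (ins σ (Fin.last (2*k+1))) else 0)
        = (if Equiv.Perm.sign σ = 1 then X 0 * mono σ else 0) :=
      if_congr (by rw [sign_ins_last]) (mono_ins_last σ) rfl
    have hzero : (if Equiv.Perm.sign (ins σ (Fin.castSucc (0 : Fin (2*k+1)))) = 1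
        then mono (ins σ (Fin.castSucc (0 : Fin (2*k+1)))) else 0)
        = (if Equiv.Perm.sign σ = -1 then X 1 * mono σ else 0) := by
      have hc0 : (Fin.castSucc (0 : Fin (2*k+1))) = (0 : Fin (2*k+2)) := rfl
      rw [hc0]
      refine if_congr ?_ (mono_ins_zero σ) rfl
      rw [sign_ins]
      exact units_odd _ (by rw [Fin.val_zero]; exact ⟨k, by omega⟩)
    have hmid : ∀ q : Fin (2*k),
        (if Equiv.Perm.sign (ins σ (Fin.castSucc (Fin.succ q))) = 1
          then mono (ins σ (Fin.castSucc (Fin.succ q))) else 0)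
        = (if Equiv.Perm.sign σ * (-1:ℤˣ)^(2*k - q.1) = 1 then wq σ q * mono σ else 0) := by
      intro q
      refine if_congr ?_ (mono_ins_mid' σ q) rfl
      rw [sign_ins]
      have hv : (Fin.castSucc (Fin.succ q)).1 = q.1 + 1 := rfl
      have hq : q.1 < 2*k := q.isLt
      have e : (2*k+1) - (Fin.castSucc (Fin.succ q)).1 = 2*k - q.1 := by omega
      rw [e]
    rw [hlast, hzero, Finset.sum_congr rfl (fun q _ => hmid q)]
    ring
  rw [Finset.sum_congr rfl (fun σ _ => hinner σ), Finset.sum_add_distrib,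
    Finset.sum_add_distrib]
  congr 1
  · congr 1
    · have h : (∑ σ : Equiv.Perm (Fin (2*k+1)),
          (if Equiv.Perm.sign σ = 1 then X 0 * mono σ else 0))
          = ∑ σ ∈ Finset.univ.filter
              (fun σ : Equiv.Perm (Fin (2*k+1)) => Equiv.Perm.sign σ = 1), X 0 * mono σ :=
        (Finset.sum_filter _ _).symm
      rw [h, ← Finset.mul_sum]
      rfl
    · have h : (∑ σ : Equiv.Perm (Fin (2*k+1)),
          (if Equiv.Perm.sign σ = -1 then X 1 * mono σ else 0))
          = ∑ σ ∈ Finset.univ.filter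
              (fun σ : Equiv.Perm (Fin (2*k+1)) => Equiv.Perm.sign σ = -1), X 1 * mono σ :=
        (Finset.sum_filter _ _).symm
      rw [h, ← Finset.mul_sum]
      rfl
  · exact cancel k

end AuxRec

theorem AbivP_even_recurrence (m : ℕ) (hm : 1 ≤ m) :
    AbivP (2*m) = MvPolynomial.X 0 * AbivP (2*m-1) + MvPolynomial.X 1 * AbivM (2*m-1)
      + MvPolynomial.C (1/2 : ℚ) *
          (MvPolynomial.X 0 * MvPolynomial.X 1 * Dop (Abiv (2*m-1))) := by
  obtain ⟨k, rfl⟩ : ∃ k, m = k + 1 := ⟨m-1, by omega⟩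
  have e2 : 2*(k+1) = 2*k+2 := by ring
  have e1 : 2*(k+1)-1 = 2*k+1 := by omega
  rw [e1, e2]
  exact AuxRec.key k
end

section
/- Let f(t) be a gamma positive univariate polynomial with center of symmetry n/2 and odd length (degree minus lowest nonzero degree is odd). Then f(t) = p_1(t) + p_2(t) where p_1 and p_2 are gamma positive with centers of symmetry (n-1)/2 and (n+1)/2 respectively, and both have even length. -/
open Finset

lemma gammaSum_coeff (γ : ℕ → ℕ) (c j : ℕ) :
    ((∑ i ∈ Finset.range (c+1), (γ i : ℚ) •
      (Polynomial.X^i * (1 + Polynomial.X)^(c - 2*i)) : Polynomial ℚ)).coeff j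
    = ∑ i ∈ Finset.range (c+1),
        (γ i : ℚ) * (if i ≤ j then ((c - 2*i).choose (j - i) : ℚ) else 0) := by
  rw [Polynomial.finset_sum_coeff]
  refine Finset.sum_congr rfl fun i _ => ?_
  rw [Polynomial.coeff_smul, smul_eq_mul, mul_comm (Polynomial.X ^ i),
    Polynomial.coeff_mul_X_pow']
  split_ifs with h
  · rw [Polynomial.coeff_one_add_X_pow]
  · rw [mul_zero]

lemma gammaSum_deg (p : Polynomial ℚ) (c : ℕ) (γ : ℕ → ℕ)
    (hγ : ∀ i, γ i ≠ 0 → 2*i ≤ c)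
    (hpe : p = ∑ i ∈ Finset.range (c+1), (γ i : ℚ) •
      (Polynomial.X^i * (1 + Polynomial.X)^(c - 2*i)))
    (hp : p ≠ 0) : p.natDegree + p.natTrailingDegree = c := by
  have hcoeff : ∀ j, p.coeff j = ∑ i ∈ Finset.range (c+1),
      (γ i : ℚ) * (if i ≤ j then ((c - 2*i).choose (j - i) : ℚ) else 0) := by
    intro j; rw [hpe]; exact gammaSum_coeff γ c j
  have hterm_nonneg : ∀ i j, (0:ℚ) ≤ (γ i : ℚ) * (if i ≤ j then ((c - 2*i).choose (j - i) : ℚ) else 0) := by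
    intro i j; positivity
  have hsingle : ∀ j i, i ∈ Finset.range (c+1) →
      (γ i : ℚ) * (if i ≤ j then ((c - 2*i).choose (j - i) : ℚ) else 0) ≤ p.coeff j := by
    intro j i hi
    rw [hcoeff]
    exact Finset.single_le_sum (fun k _ => hterm_nonneg k j) hi
  -- step D: γ i ≠ 0 → natTrailingDegree ≤ i
  have hD : ∀ i, γ i ≠ 0 → p.natTrailingDegree ≤ i := by
    intro i hi
    apply Polynomial.natTrailingDegree_le_of_ne_zero
    have h2i := hγ i hi
    have hmem : i ∈ Finset.range (c+1) := Finset.mem_range.2 (by omega)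
    have := hsingle i i hmem
    simp only [le_refl, if_pos, Nat.sub_self, Nat.choose_zero_right, Nat.cast_one, mul_one] at this
    have hγpos : (0:ℚ) < (γ i : ℚ) := by exact_mod_cast Nat.pos_of_ne_zero hi
    linarith
  set d := p.natTrailingDegree with hd
  -- step E: γ d ≠ 0 and 2d ≤ c
  have hcd : p.coeff d ≠ 0 := Polynomial.coeff_natTrailingDegree_ne_zero.mpr hp
  have hγd : γ d ≠ 0 := by
    by_contra hγd0
    apply hcd
    rw [hcoeff]
    refine Finset.sum_eq_zero fun i hi => ?_
    by_cases h0 : γ i = 0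
    · simp [h0]
    · have := hD i h0
      split_ifs with h
      · have : i = d := le_antisymm h (hD i h0)
        exact absurd (this ▸ h0) (by simp [hγd0])
      · ring
  have h2d : 2*d ≤ c := hγ d hγd
  -- step F: c - d ≤ natDegree
  have hF : c - d ≤ p.natDegree := by
    apply Polynomial.le_natDegree_of_ne_zero
    have hmem : d ∈ Finset.range (c+1) := Finset.mem_range.2 (by omega)
    have := hsingle (c - d) d hmem
    rw [if_pos (by omega : d ≤ c - d)] at this
    have heq : c - d - d = c - 2*d := by omega
    rw [heq, Nat.choose_self] at this
    have hγpos : (0:ℚ) < (γ d : ℚ) := by exact_mod_cast Nat.pos_of_ne_zero hγd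
    have hnn : (0:ℚ) ≤ p.coeff (c - d) := by
      rw [hcoeff]; exact Finset.sum_nonneg fun i _ => hterm_nonneg i (c - d)
    intro h0
    rw [h0] at this
    simp at this
    exact hγd (by exact_mod_cast this)
  -- step G: natDegree ≤ c - d
  have hG : p.natDegree ≤ c - d := by
    rw [Polynomial.natDegree_le_iff_coeff_eq_zero]
    intro j hj
    rw [hcoeff]
    refine Finset.sum_eq_zero fun i hi => ?_
    by_cases h0 : γ i = 0
    · simp [h0]
    · have hdi := hD i h0
      have h2i := hγ i h0
      split_ifs with h
      · have : (c - 2*i) < j - i := by omega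
        rw [Nat.choose_eq_zero_of_lt this]
        simp
      · ring
  omega

lemma uniGamma_even_length (p : Polynomial ℚ) (c : ℕ) (hc : Even c)
    (h : UniGamma p c) : Even (p.natDegree - p.natTrailingDegree) := by
  by_cases hp : p = 0
  · simp [hp]
  · obtain ⟨γ, hγ, hpe⟩ := h
    have hsum := gammaSum_deg p c γ hγ hpe hp
    have hdle := p.natTrailingDegree_le_natDegree
    obtain ⟨k, hk⟩ := hc
    exact ⟨k - p.natTrailingDegree, by omega⟩

theorem odd_length_gamma_split' (f : Polynomial ℚ) (n : ℕ) (hf : UniGamma f n)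
    (hodd : Odd (f.natDegree - f.natTrailingDegree)) :
    ∃ p1 p2 : Polynomial ℚ, f = p1 + p2 ∧
      UniGamma p1 (n-1) ∧ UniGamma p2 (n+1) ∧
      Even (p1.natDegree - p1.natTrailingDegree) ∧
      Even (p2.natDegree - p2.natTrailingDegree) := by
  obtain ⟨γ, hγ, hfe⟩ := hf
  have hf0 : f ≠ 0 := by
    intro h0; rw [h0] at hodd; simp at hodd
  have hsum := gammaSum_deg f n γ hγ hfe hf0
  have hdle := f.natTrailingDegree_le_natDegree
  have hmod : (f.natDegree - f.natTrailingDegree) % 2 = 1 := Nat.odd_iff.mp hodd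
  have hn : n % 2 = 1 := by omega
  have hn1 : 1 ≤ n := by omega
  have hγn : γ n = 0 := by
    by_contra h
    have := hγ n h
    omega
  set γ2 : ℕ → ℕ := fun i => match i with | 0 => 0 | j+1 => γ j with hγ2
  refine ⟨∑ i ∈ Finset.range ((n-1)+1), (γ i : ℚ) •
      (Polynomial.X^i * (1 + Polynomial.X)^((n-1) - 2*i)),
    ∑ i ∈ Finset.range ((n+1)+1), (γ2 i : ℚ) •
      (Polynomial.X^i * (1 + Polynomial.X)^((n+1) - 2*i)), ?_, ?_, ?_, ?_, ?_⟩
  · -- f = p1 + p2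
    have hr : (n-1)+1 = n := by omega
    rw [hr]
    have hp2 : (∑ i ∈ Finset.range ((n+1)+1), (γ2 i : ℚ) •
        (Polynomial.X^i * (1 + Polynomial.X)^((n+1) - 2*i)) : Polynomial ℚ)
        = ∑ j ∈ Finset.range (n+1), (γ j : ℚ) •
          (Polynomial.X^(j+1) * (1 + Polynomial.X)^((n+1) - 2*(j+1))) := by
      rw [Finset.sum_range_succ']
      simp [hγ2]
    rw [hp2]
    have hp1 : (∑ i ∈ Finset.range n, (γ i : ℚ) •
        (Polynomial.X^i * (1 + Polynomial.X)^((n-1) - 2*i)) : Polynomial ℚ)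
        = ∑ i ∈ Finset.range (n+1), (γ i : ℚ) •
          (Polynomial.X^i * (1 + Polynomial.X)^((n-1) - 2*i)) := by
      rw [Finset.sum_range_succ, hγn]
      simp
    rw [hp1, hfe, ← Finset.sum_add_distrib]
    refine Finset.sum_congr rfl fun i _ => ?_
    by_cases h0 : γ i = 0
    · simp [h0]
    · have h2i := hγ i h0
      have e1 : n - 2*i = ((n-1) - 2*i) + 1 := by omega
      have e2 : (n+1) - 2*(i+1) = (n-1) - 2*i := by omega
      rw [e1, e2, Polynomial.smul_eq_C_mul, Polynomial.smul_eq_C_mul,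
        Polynomial.smul_eq_C_mul]
      ring
  · exact ⟨γ, fun i hi => by have := hγ i hi; omega, rfl⟩
  · refine ⟨γ2, fun i hi => ?_, rfl⟩
    match i with
    | 0 => simp [hγ2] at hi
    | j+1 =>
      have : γ j ≠ 0 := hi
      have := hγ j this
      omega
  · exact uniGamma_even_length _ (n-1) (by exact ⟨(n-1)/2, by omega⟩)
      ⟨γ, fun i hi => by have := hγ i hi; omega, rfl⟩
  · refine uniGamma_even_length _ (n+1) ⟨(n+1)/2, by omega⟩
      ⟨γ2, fun i hi => ?_, rfl⟩
    match i with
    | 0 => simp [hγ2] at hi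
    | j+1 =>
      have : γ j ≠ 0 := hi
      have := hγ j this
      omega

theorem odd_length_gamma_split (f : Polynomial ℚ) (n : ℕ) (hf : UniGamma f n)
    (hodd : Odd (f.natDegree - f.natTrailingDegree)) :
    ∃ p1 p2 : Polynomial ℚ, f = p1 + p2 ∧
      UniGamma p1 (n-1) ∧ UniGamma p2 (n+1) ∧
      Even (p1.natDegree - p1.natTrailingDegree) ∧
      Even (p2.natDegree - p2.natTrailingDegree) := odd_length_gamma_split' f n hf hodd
end

section
/- The bivariate type-B Eulerian polynomial B_n(s,t) = Σ_{π ∈ B_n} t^{des_B(π)} s^{n - des_B(π)} satisfies the recurrence B_{n+1}(s,t) = (s+t)·B_n(s,t) + 2st·(∂/∂s + ∂/∂t) B_n(s,t), and is gamma positive: B_n(s,t) = Σ_{i=0}^{⌊n/2⌋} γ^B_{n,i} (st)^i (s+t)^{n-2i} with nonnegative integers γ^B_{n,i} satisfying γ^B_{n+1,i} = (2i+1)γ^B_{n,i} + 4(n-2i+2)γ^B_{n,i-1}. -/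
open Finset

/-!
Every signed permutation of `[n+1]` arises exactly once by inserting `n+1` or `-(n+1)` into one
of the `n+1` slots of a signed permutation of `[n]`. A letter larger or smaller than both of its
neighbours (the sentinel `π(0) = 0` counts as a neighbour) turns its slot into exactly one descent,
so an insertion keeps the descent number when the slot was a descent and raises it by one
otherwise, and at the end of the word only `-(n+1)` creates a descent. A signed permutation with
`k` descents therefore spreads into `(2k+1) t^k s^(n+1-k) + (2(n-k)+1) t^(k+1) s^(n-k)`, which is
the operator `(s+t) + 2st(∂/∂s + ∂/∂t)` applied to `t^k s^(n-k)`. The same operator sends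
`(st)^i (s+t)^m` to `(2i+1) (st)^i (s+t)^(m+1) + 4m (st)^(i+1) (s+t)^(m-1)`, so the gamma
expansion and the recurrence of its coefficients follow by induction on `n`.
-/

open MvPolynomial

noncomputable def diagDeriv :
    Derivation ℚ (MvPolynomial (Fin 2) ℚ) (MvPolynomial (Fin 2) ℚ) :=
  pderiv 0 + pderiv 1

theorem diagDeriv_X (i : Fin 2) : diagDeriv (X i) = 1 := by
  fin_cases i <;> simp [diagDeriv, pderiv_X]

noncomputable def eulerOpB : MvPolynomial (Fin 2) ℚ →ₗ[ℚ] MvPolynomial (Fin 2) ℚ :=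
  LinearMap.mulLeft ℚ (X 0 + X 1) +
    LinearMap.mulLeft ℚ (2 * (X 0 * X 1)) ∘ₗ diagDeriv.toLinearMap

theorem eulerOpB_apply (f : MvPolynomial (Fin 2) ℚ) :
    eulerOpB f = (X 0 + X 1) * f + 2 * (X 0 * X 1) * diagDeriv f := rfl

theorem eulerOpB_apply_Dop (f : MvPolynomial (Fin 2) ℚ) :
    eulerOpB f = (X 0 + X 1) * f + 2 * (X 0 * X 1 * Dop f) := by
  rw [eulerOpB_apply, mul_assoc]
  rfl

theorem eulerOpB_monomial (k m : ℕ) :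
    eulerOpB (X 1 ^ k * X 0 ^ m) =
      (2 * k + 1 : MvPolynomial (Fin 2) ℚ) * (X 1 ^ k * X 0 ^ (m + 1)) +
        (2 * m + 1 : MvPolynomial (Fin 2) ℚ) * (X 1 ^ (k + 1) * X 0 ^ m) := by
  rw [eulerOpB_apply, Derivation.leibniz, Derivation.leibniz_pow, Derivation.leibniz_pow,
    diagDeriv_X, diagDeriv_X]
  rcases k with _ | k <;> rcases m with _ | m <;>
    simp only [smul_eq_mul, nsmul_eq_mul, Nat.add_sub_cancel, Nat.cast_add, Nat.cast_one,
      Nat.cast_zero] <;> ring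

theorem eulerOpB_gamma (i m : ℕ) :
    eulerOpB ((X 0 * X 1) ^ i * (X 0 + X 1) ^ m) =
      (2 * i + 1 : MvPolynomial (Fin 2) ℚ) * ((X 0 * X 1) ^ i * (X 0 + X 1) ^ (m + 1)) +
        (4 * m : MvPolynomial (Fin 2) ℚ) * ((X 0 * X 1) ^ (i + 1) * (X 0 + X 1) ^ (m - 1)) := by
  rw [eulerOpB_apply, Derivation.leibniz, Derivation.leibniz_pow, Derivation.leibniz_pow,
    Derivation.leibniz, map_add, diagDeriv_X, diagDeriv_X]
  rcases i with _ | i <;> rcases m with _ | m <;>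
    simp only [smul_eq_mul, nsmul_eq_mul, Nat.add_sub_cancel, Nat.cast_add, Nat.cast_one,
      Nat.cast_zero] <;> ring

section Words

variable {α : Type*}

def insertAfter (f : ℕ → α) (p : ℕ) (x : α) (j : ℕ) : α :=
  if j = p + 1 then x else if j ≤ p then f j else f (j - 1)

theorem insertAfter_of_le (f : ℕ → α) {p j : ℕ} (x : α) (hj : j ≤ p) :
    insertAfter f p x j = f j := by
  simp only [insertAfter, if_neg (show j ≠ p + 1 by omega), if_pos hj]

theorem insertAfter_of_succ_lt (f : ℕ → α) {p j : ℕ} (x : α) (hj : p + 1 < j) :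
    insertAfter f p x j = f (j - 1) := by
  simp only [insertAfter, if_neg (show j ≠ p + 1 by omega), if_neg (show ¬ j ≤ p by omega)]

theorem insertAfter_self (f : ℕ → α) (p : ℕ) (x : α) : insertAfter f p x (p + 1) = x :=
  if_pos rfl

variable [LinearOrder α]

def countDescents (f : ℕ → α) (n : ℕ) : ℕ :=
  ((range n).filter fun i => f (i + 1) < f i).card

theorem countDescents_succ (f : ℕ → α) (n : ℕ) :
    countDescents f (n + 1) = countDescents f n + if f (n + 1) < f n then 1 else 0 := by
  simp only [countDescents, range_add_one, filter_insert]
  split_ifs <;> simp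

theorem countDescents_congr {f g : ℕ → α} {n : ℕ} (h : ∀ j ≤ n, f j = g j) :
    countDescents f n = countDescents g n := by
  unfold countDescents
  congr 1
  refine filter_congr fun i hi => ?_
  rw [mem_range] at hi
  rw [h i (by omega), h (i + 1) (by omega)]

theorem countDescents_insertAfter_self (f : ℕ → α) (n : ℕ) (x : α) :
    countDescents (insertAfter f n x) (n + 1) = countDescents f n + if x < f n then 1 else 0 := by
  rw [countDescents_succ, countDescents_congr (g := f) fun j hj => insertAfter_of_le f x hj,
    insertAfter_self, insertAfter_of_le f x le_rfl]

theorem countDescents_insertAfter_of_succ_lt (f : ℕ → α) {n p : ℕ} (x : α) (hp : p < n)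
    (hx : f p < x ∧ f (p + 1) < x ∨ x < f p ∧ x < f (p + 1)) :
    countDescents (insertAfter f p x) (n + 1) + (if f (p + 1) < f p then 1 else 0) =
      countDescents f n + 1 := by
  induction n, hp using Nat.le_induction with
  | base =>
    have hslot : (if x < f p then 1 else 0) + (if f (p + 1) < x then 1 else 0) = 1 := by
      rcases hx with ⟨h₀, h₁⟩ | ⟨h₀, h₁⟩
      · simp [h₁, h₀.not_gt]
      · simp [h₀, h₁.not_gt]
    rw [countDescents_succ, countDescents_succ, countDescents_succ,
      countDescents_congr (g := f) fun j hj => insertAfter_of_le f x hj, insertAfter_self,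
      insertAfter_of_le f x le_rfl, insertAfter_of_succ_lt f x (by omega), Nat.add_sub_cancel]
    omega
  | succ m hm ih =>
    rw [countDescents_succ, countDescents_succ f m, insertAfter_of_succ_lt f x (by omega),
      insertAfter_of_succ_lt f x (by omega), Nat.add_sub_cancel, Nat.add_sub_cancel]
    omega

end Words

theorem Fin.insertNth_apply_mk {n : ℕ} {α : Type*} (p : Fin (n + 1)) (x : α) (f : Fin n → α)
    (j : ℕ) (hj : j < n + 1) :
    Fin.insertNth (α := fun _ => α) p x f ⟨j, hj⟩ =
      if h : j < p then f ⟨j, by omega⟩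
      else if h' : j = p then x else f ⟨j - 1, by omega⟩ := by
  split_ifs with h h'
  · rw [Fin.insertNth_apply_below (by exact h)]
    simp only [eq_rec_constant]; rfl
  · obtain rfl : (⟨j, hj⟩ : Fin (n + 1)) = p := Fin.ext h'
    exact Fin.insertNth_apply_same _ _ _
  · rw [Fin.insertNth_apply_above (by change p.1 < j; omega)]
    simp only [eq_rec_constant]; rfl

theorem Fin.insertNth_injective {n : ℕ} {β : Type*} {p : Fin (n + 1)} {x : β} {f : Fin n → β}
    (hf : Function.Injective f) (hx : ∀ i, f i ≠ x) :
    Function.Injective (Fin.insertNth (α := fun _ => β) p x f) := by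
  intro a b h
  induction a using Fin.succAboveCases p <;> induction b using Fin.succAboveCases p <;>
    simp_all [hf.eq_iff, (hx _).symm]

noncomputable def permInsertMax {n : ℕ} (π : Equiv.Perm (Fin n)) (p : Fin (n + 1)) :
    Equiv.Perm (Fin (n + 1)) :=
  Equiv.ofBijective _ (Finite.injective_iff_bijective.mp
    (Fin.insertNth_injective (p := p) (Fin.castSucc_injective n |>.comp π.injective)
      fun i => Fin.castSucc_ne_last (π i)))

@[simp]
theorem permInsertMax_apply_self {n : ℕ} (π : Equiv.Perm (Fin n)) (p : Fin (n + 1)) :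
    permInsertMax π p p = Fin.last n := by
  simp [permInsertMax]

@[simp]
theorem permInsertMax_apply_succAbove {n : ℕ} (π : Equiv.Perm (Fin n)) (p : Fin (n + 1))
    (i : Fin n) : permInsertMax π p (p.succAbove i) = (π i).castSucc := by
  simp [permInsertMax]

theorem permInsertMax_apply_mk {n : ℕ} (π : Equiv.Perm (Fin n)) (p : Fin (n + 1)) (j : ℕ)
    (hj : j < n + 1) :
    permInsertMax π p ⟨j, hj⟩ =
      if h : j < p then (π ⟨j, by omega⟩).castSucc
      else if h' : j = p then Fin.last n else (π ⟨j - 1, by omega⟩).castSucc :=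
  Fin.insertNth_apply_mk _ _ _ _ _

@[simp]
theorem permInsertMax_symm_last {n : ℕ} (π : Equiv.Perm (Fin n)) (p : Fin (n + 1)) :
    (permInsertMax π p).symm (Fin.last n) = p := by
  rw [Equiv.symm_apply_eq, permInsertMax_apply_self]

@[simp]
theorem restrictMax_permInsertMax {n : ℕ} (π : Equiv.Perm (Fin n)) (p : Fin (n + 1)) :
    restrictMax (permInsertMax π p) = π := by
  ext i
  simp [restrictMax]

@[simp]
theorem permInsertMax_restrictMax {n : ℕ} (π : Equiv.Perm (Fin (n + 1))) :
    permInsertMax (restrictMax π) (π.symm (Fin.last n)) = π := by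
  ext j : 1
  induction j using Fin.succAboveCases (π.symm (Fin.last n)) <;> simp [restrictMax]

namespace SignedPerm

noncomputable def insertMax {n : ℕ} (w : SignedPerm n) (p : Fin (n + 1)) (ε : Bool) :
    SignedPerm (n + 1) :=
  (permInsertMax w.1 p, Fin.insertNth p ε w.2)

noncomputable def insertMaxEquiv (n : ℕ) :
    SignedPerm n × Fin (n + 1) × Bool ≃ SignedPerm (n + 1) where
  toFun x := x.1.insertMax x.2.1 x.2.2
  invFun w :=
    let p := w.1.symm (Fin.last n)
    ((restrictMax w.1, p.removeNth w.2), p, w.2 p)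
  left_inv := by
    rintro ⟨w, p, ε⟩
    simp [insertMax]
  right_inv := by
    rintro ⟨π, s⟩
    simp [insertMax]

end SignedPerm

theorem bw_insertMax {n : ℕ} (w : SignedPerm n) (p : Fin (n + 1)) (ε : Bool) :
    bw (w.insertMax p ε) = insertAfter (bw w) p (if ε then -((n : ℤ) + 1) else n + 1) := by
  funext j
  simp only [bw, insertAfter, SignedPerm.insertMax, permInsertMax_apply_mk, Fin.insertNth_apply_mk]
  split_ifs <;> first | omega | simp_all

theorem desB_eq_countDescents {n : ℕ} (w : SignedPerm n) : desB w = countDescents (bw w) n := rfl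

theorem desB_le {n : ℕ} (w : SignedPerm n) : desB w ≤ n :=
  (card_filter_le _ _).trans (card_range n).le

theorem abs_bw_le {n : ℕ} (w : SignedPerm n) (j : ℕ) : |bw w j| ≤ n := by
  unfold bw
  split_ifs with h
  all_goals first
    | (have := (w.1 ⟨j - 1, by omega⟩).2; rw [abs_le]; constructor <;> omega)
    | simp

theorem desB_insertMax_last {n : ℕ} (w : SignedPerm n) (ε : Bool) :
    desB (w.insertMax (Fin.last n) ε) = desB w + if ε then 1 else 0 := by
  have := abs_le.mp (abs_bw_le w n)
  rw [desB_eq_countDescents, desB_eq_countDescents, bw_insertMax, Fin.val_last,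
    countDescents_insertAfter_self]
  cases ε <;> simp only [Bool.false_eq_true, ↓reduceIte] <;> split_ifs <;> omega

theorem desB_insertMax_castSucc {n : ℕ} (w : SignedPerm n) (i : Fin n) (ε : Bool) :
    desB (w.insertMax i.castSucc ε) + (if bw w (i + 1) < bw w i then 1 else 0) = desB w + 1 := by
  have h₀ := abs_le.mp (abs_bw_le w i)
  have h₁ := abs_le.mp (abs_bw_le w (i + 1))
  rw [desB_eq_countDescents, desB_eq_countDescents, bw_insertMax, Fin.val_castSucc]
  refine countDescents_insertAfter_of_succ_lt _ _ i.2 ?_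
  cases ε <;> simp only [Bool.false_eq_true, ↓reduceIte] <;> omega

noncomputable def descentMonomial (n k : ℕ) : MvPolynomial (Fin 2) ℚ := X 1 ^ k * X 0 ^ (n - k)

theorem eulerOpB_descentMonomial {n k : ℕ} (hk : k ≤ n) :
    eulerOpB (descentMonomial n k) =
      (2 * k + 1 : MvPolynomial (Fin 2) ℚ) * descentMonomial (n + 1) k +
        (2 * (n - k : ℕ) + 1 : MvPolynomial (Fin 2) ℚ) * descentMonomial (n + 1) (k + 1) := by
  rw [descentMonomial, eulerOpB_monomial, descentMonomial, descentMonomial,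
    show n - k + 1 = n + 1 - k by omega, show n + 1 - (k + 1) = n - k by omega]

theorem sum_ite_descent {n : ℕ} (w : SignedPerm n) {M : Type*} [AddCommMonoid M] (a b : M) :
    ∑ i : Fin n, (if bw w (i + 1) < bw w i then a else b) =
      desB w • a + (n - desB w) • b := by
  rw [Fin.sum_univ_eq_sum_range (fun i => if bw w (i + 1) < bw w i then a else b), sum_ite,
    sum_const, sum_const]
  have := card_filter_add_card_filter_not (s := range n) (p := fun i => bw w (i + 1) < bw w i)
  rw [card_range] at this
  rw [desB]
  congr 2
  omega

theorem sum_descentMonomial_insertMax {n : ℕ} (w : SignedPerm n) :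
    ∑ p : Fin (n + 1), ∑ ε : Bool, descentMonomial (n + 1) (desB (w.insertMax p ε)) =
      eulerOpB (descentMonomial n (desB w)) := by
  have hmid (i : Fin n) (ε : Bool) : descentMonomial (n + 1) (desB (w.insertMax i.castSucc ε)) =
      if bw w (i + 1) < bw w i then descentMonomial (n + 1) (desB w)
      else descentMonomial (n + 1) (desB w + 1) := by
    have := desB_insertMax_castSucc w i ε
    rw [← apply_ite (descentMonomial (n + 1))]
    congr 1
    split_ifs at this ⊢ <;> omega
  simp only [Fin.sum_univ_castSucc, hmid, Fintype.sum_bool, desB_insertMax_last, sum_add_distrib,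
    sum_ite_descent]
  rw [eulerOpB_descentMonomial (desB_le w)]
  simp only [Bool.false_eq_true, ↓reduceIte, add_zero, nsmul_eq_mul]
  ring

theorem Bbiv_eq_sum_descentMonomial (n : ℕ) :
    Bbiv n = ∑ w : SignedPerm n, descentMonomial n (desB w) := rfl

theorem Bbiv_succ_eq_eulerOpB (n : ℕ) : Bbiv (n + 1) = eulerOpB (Bbiv n) := by
  rw [Bbiv_eq_sum_descentMonomial, ← (SignedPerm.insertMaxEquiv n).sum_comp,
    Bbiv_eq_sum_descentMonomial, map_sum, Fintype.sum_prod_type]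
  exact sum_congr rfl fun w _ => by
    rw [Fintype.sum_prod_type, ← sum_descentMonomial_insertMax]
    rfl

-- `Int.toNat` only truncates where `gammaB n (i - 1)` vanishes anyway (see `gammaB_succ`).
def gammaB : ℕ → ℤ → ℕ
  | 0, i => if i = 0 then 1 else 0
  | n + 1, i => if i < 0 then 0 else
      (2 * i + 1).toNat * gammaB n i + (4 * (n - 2 * i + 2)).toNat * gammaB n (i - 1)

theorem gammaB_of_neg {i : ℤ} (hi : i < 0) (n : ℕ) : gammaB n i = 0 := by
  cases n <;> rw [gammaB] <;> split_ifs <;> omega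

theorem gammaB_of_lt {n : ℕ} {i : ℤ} (hi : n < 2 * i) : gammaB n i = 0 := by
  induction n generalizing i with
  | zero => rw [gammaB, if_neg (by omega)]
  | succ n ih =>
    rw [gammaB, ih (by omega),
      Int.toNat_eq_zero.mpr (show 4 * ((n : ℤ) - 2 * i + 2) ≤ 0 by omega), mul_zero, zero_mul,
      add_zero, ite_self]

theorem gammaB_succ (n : ℕ) (i : ℤ) :
    (gammaB (n + 1) i : ℤ) =
      (2 * i + 1) * gammaB n i + 4 * ((n : ℤ) - 2 * i + 2) * gammaB n (i - 1) := by
  rcases lt_or_ge i 0 with hi | hi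
  · simp [gammaB_of_neg hi, gammaB_of_neg (show i - 1 < 0 by omega)]
  rw [gammaB, if_neg hi.not_gt]
  rcases lt_or_ge ((n : ℤ) - 2 * i + 2) 0 with hn | hn
  · rw [gammaB_of_lt (show (n : ℤ) < 2 * (i - 1) by omega)]
    simp [Int.toNat_of_nonneg (show 0 ≤ 2 * i + 1 by omega)]
  · push_cast
    rw [Int.toNat_of_nonneg (by omega), Int.toNat_of_nonneg (by omega)]

noncomputable def gammaBasis (n i : ℕ) : MvPolynomial (Fin 2) ℚ :=
  (X 0 * X 1) ^ i * (X 0 + X 1) ^ (n - 2 * i)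

theorem eulerOpB_natCast_mul (k : ℕ) (f : MvPolynomial (Fin 2) ℚ) :
    eulerOpB (k * f) = k * eulerOpB f := by
  rw [← nsmul_eq_mul, map_nsmul, nsmul_eq_mul]

theorem gammaB_mul_eulerOpB_gammaBasis (n i : ℕ) :
    (gammaB n i : MvPolynomial (Fin 2) ℚ) * eulerOpB (gammaBasis n i) =
      (2 * i + 1) * gammaB n i * gammaBasis (n + 1) i +
        4 * ((n : MvPolynomial (Fin 2) ℚ) - 2 * i) * gammaB n i * gammaBasis (n + 1) (i + 1) := by
  by_cases hγ : gammaB n i = 0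
  · simp [hγ]
  have hi : 2 * i ≤ n := by
    by_contra h
    exact hγ (gammaB_of_lt (by omega))
  rw [gammaBasis, eulerOpB_gamma, gammaBasis, gammaBasis,
    show n - 2 * i + 1 = n + 1 - 2 * i by omega, show n - 2 * i - 1 = n + 1 - 2 * (i + 1) by omega,
    Nat.cast_sub hi]
  push_cast
  ring

theorem Bbiv_eq_sum_gammaB (n : ℕ) :
    Bbiv n = ∑ i ∈ range (n + 1), (gammaB n i : MvPolynomial (Fin 2) ℚ) * gammaBasis n i := by
  induction n with
  | zero => simp [Bbiv, desB, gammaB, gammaBasis]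
  | succ n ih =>
    have hcoef (j : ℕ) : (gammaB (n + 1) j : MvPolynomial (Fin 2) ℚ) =
        (2 * j + 1) * gammaB n j +
          4 * ((n : MvPolynomial (Fin 2) ℚ) - 2 * j + 2) * gammaB n (j - 1) := by
      exact_mod_cast congrArg (Int.cast : ℤ → MvPolynomial (Fin 2) ℚ) (gammaB_succ n j)
    calc Bbiv (n + 1)
        = ∑ i ∈ range (n + 1),
            (gammaB n i : MvPolynomial (Fin 2) ℚ) * eulerOpB (gammaBasis n i) := by
          rw [Bbiv_succ_eq_eulerOpB, ih, map_sum]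
          simp only [eulerOpB_natCast_mul]
      _ = ∑ i ∈ range (n + 1), (2 * i + 1) * gammaB n i * gammaBasis (n + 1) i +
            ∑ i ∈ range (n + 1), 4 * ((n : MvPolynomial (Fin 2) ℚ) - 2 * i) * gammaB n i *
              gammaBasis (n + 1) (i + 1) := by
          simp only [gammaB_mul_eulerOpB_gammaBasis, sum_add_distrib]
      _ = ∑ j ∈ range (n + 2), (2 * j + 1) * gammaB n j * gammaBasis (n + 1) j +
            ∑ j ∈ range (n + 2), 4 * ((n : MvPolynomial (Fin 2) ℚ) - 2 * j + 2) *
              gammaB n (j - 1) * gammaBasis (n + 1) j := by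
          rw [sum_range_succ _ (n + 1), sum_range_succ' _ (n + 1),
            gammaB_of_lt (by push_cast; omega), gammaB_of_neg (by omega)]
          simp only [Nat.cast_add, Nat.cast_one, add_sub_cancel_right, CharP.cast_eq_zero, mul_zero,
            zero_mul, add_zero]
          congr 1
          refine sum_congr rfl fun i _ => by ring
      _ = ∑ j ∈ range (n + 2),
            (gammaB (n + 1) j : MvPolynomial (Fin 2) ℚ) * gammaBasis (n + 1) j := by
          rw [← sum_add_distrib]
          simp only [hcoef, add_mul]

theorem typeB_recurrence_and_gamma :
    (∀ n : ℕ, Bbiv (n+1) = (MvPolynomial.X 0 + MvPolynomial.X 1) * Bbiv n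
      + 2 * (MvPolynomial.X 0 * MvPolynomial.X 1 * Dop (Bbiv n))) ∧
    ∃ γ : ℕ → ℤ → ℕ,
      (∀ n : ℕ, ∀ i : ℤ, i < 0 → γ n i = 0) ∧
      (∀ n : ℕ, Bbiv n =
        ∑ i ∈ Finset.range (n/2 + 1), (γ n (i : ℤ) : MvPolynomial (Fin 2) ℚ) *
          ((MvPolynomial.X 0 * MvPolynomial.X 1)^i *
            (MvPolynomial.X 0 + MvPolynomial.X 1)^(n - 2*i))) ∧
      (∀ n : ℕ, ∀ i : ℤ,
        (γ (n+1) i : ℤ) = (2*i+1) * γ n i + 4*((n : ℤ) - 2*i + 2) * γ n (i-1)) := by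
  refine ⟨fun n => (Bbiv_succ_eq_eulerOpB n).trans (eulerOpB_apply_Dop _), gammaB,
    fun n i hi => gammaB_of_neg hi n, fun n => ?_, gammaB_succ⟩
  rw [Bbiv_eq_sum_gammaB]
  refine (sum_subset (range_subset_range.mpr (by omega)) fun i _ hi => ?_).symm
  rw [gammaB_of_lt (by rw [mem_range] at hi; omega), Nat.cast_zero, zero_mul]
end
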